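/- Let A be an abelian torsion group with no elements of order 2. Then the short exact sequence 1 → ∇(A) → A ⊗ A → A ∧ A → 1 splits on the left; consequently A ⊗ A ≅ ∇(A) × (A ∧ A). -/

import Mathlib

/- Nonabelian tensor square framework (Brown–Loday). -/

namespace NATensor

variable (G : Type*) [Group G]

/-- The relator set for the nonabelian tensor square of `G`:
`g g' ⊗ h = (ᵍg' ⊗ ᵍh)(g ⊗ h)` and `g ⊗ h h' = (g ⊗ h)(ʰg ⊗ ʰh')`. -/
def rels : Set (FreeGroup (G × G)) :=
  {r | (∃ g g' h : G,
          r = FreeGroup.of (g * g', h) *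
              (FreeGroup.of (g * g' * g⁻¹, g * h * g⁻¹) * FreeGroup.of (g, h))⁻¹) ∨
       (∃ g h h' : G,
          r = FreeGroup.of (g, h * h') *
              (FreeGroup.of (g, h) * FreeGroup.of (h * g * h⁻¹, h * h' * h⁻¹))⁻¹)}

/-- The nonabelian tensor square `G ⊗ G`. -/
abbrev TS := PresentedGroup (rels G)

variable {G}

/-- The generator `g ⊗ h` of the nonabelian tensor square. -/
def tmul (g h : G) : TS G := PresentedGroup.of (g, h)

lemma mk_rel_eq_one {r : FreeGroup (G × G)} (hr : r ∈ rels G) :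
    (PresentedGroup.mk (rels G) r : TS G) = 1 :=
  (QuotientGroup.eq_one_iff r).mpr (Subgroup.subset_normalClosure hr)

lemma tmul_rel₁ (g g' h : G) :
    tmul (g * g') h = tmul (g * g' * g⁻¹) (g * h * g⁻¹) * tmul g h := by
  have h1 := mk_rel_eq_one (G := G) (Or.inl ⟨g, g', h, rfl⟩)
  simp only [map_mul, map_inv, mul_inv_eq_one] at h1
  exact h1

lemma tmul_rel₂ (g h h' : G) :
    tmul g (h * h') = tmul g h * tmul (h * g * h⁻¹) (h * h' * h⁻¹) := by
  have h1 := mk_rel_eq_one (G := G) (Or.inr ⟨g, h, h', rfl⟩)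
  simp only [map_mul, map_inv, mul_inv_eq_one] at h1
  exact h1

variable (G)

/-- The homomorphism `κ : G ⊗ G → G`, `g ⊗ h ↦ [g,h] = g h g⁻¹ h⁻¹` (its image is `[G,G]`). -/
def kappa : TS G →* G :=
  PresentedGroup.toGroup (f := fun x : G × G => x.1 * x.2 * x.1⁻¹ * x.2⁻¹) (by
    rintro r (⟨g, g', h, rfl⟩ | ⟨g, h, h', rfl⟩) <;>
      simp only [map_mul, map_inv, FreeGroup.lift_apply_of] <;> group)

variable {G}

@[simp] lemma kappa_tmul (g h : G) : kappa G (tmul g h) = g * h * g⁻¹ * h⁻¹ :=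
  PresentedGroup.toGroup.of _

variable (G)

/-- `J(G) = ker κ ≅ π₃(SK(G,1))`. -/
def J : Subgroup (TS G) := (kappa G).ker

/-- `∇(G)`: the (normal) subgroup of `G ⊗ G` generated by the elements `x ⊗ x`. -/
def nabla : Subgroup (TS G) :=
  Subgroup.normalClosure {t | ∃ x : G, t = tmul x x}

/-- `Δ(G)`: the (normal) subgroup of `G ⊗ G` generated by the `(x ⊗ y)(y ⊗ x)`. -/
def delta : Subgroup (TS G) :=
  Subgroup.normalClosure {t | ∃ x y : G, t = tmul x y * tmul y x}

instance : (nabla G).Normal := Subgroup.normalClosure_normal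

instance : (delta G).Normal := Subgroup.normalClosure_normal

/-- The exterior square `G ∧ G = (G ⊗ G)/∇(G)`. -/
abbrev ES := TS G ⧸ nabla G

/-- The symmetric square `G ⊗̃ G = (G ⊗ G)/Δ(G)`. -/
abbrev SS := TS G ⧸ delta G

variable {G}

/-- The element `g ∧ h` of the exterior square. -/
def emul (g h : G) : ES G := QuotientGroup.mk' (nabla G) (tmul g h)

/-- The image of `g ⊗ h` in the symmetric square. -/
def smul (g h : G) : SS G := QuotientGroup.mk' (delta G) (tmul g h)

variable {H : Type*} [Group H]

/-- The induced homomorphism `G ⊗ G → H ⊗ H` of a homomorphism `f : G → H`. -/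
def tmap (f : G →* H) : TS G →* TS H :=
  PresentedGroup.toGroup (f := fun x : G × G => tmul (f x.1) (f x.2)) (by
    rintro r (⟨g, g', h, rfl⟩ | ⟨g, h, h', rfl⟩) <;>
      simp only [map_mul, map_inv, FreeGroup.lift_apply_of, mul_inv_eq_one]
    · rw [tmul_rel₁]
    · rw [tmul_rel₂])

@[simp] lemma tmap_tmul (f : G →* H) (g h : G) :
    tmap f (tmul g h) = tmul (f g) (f h) :=
  PresentedGroup.toGroup.of _

lemma nabla_le_comap_nabla (f : G →* H) :
    nabla G ≤ MonoidHom.ker ((QuotientGroup.mk' (nabla H)).comp (tmap f)) := by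
  refine Subgroup.normalClosure_le_normal ?_
  rintro _ ⟨y, rfl⟩
  simp only [SetLike.mem_coe, MonoidHom.mem_ker, MonoidHom.comp_apply, tmap_tmul,
    QuotientGroup.mk'_apply, QuotientGroup.eq_one_iff]
  exact Subgroup.subset_normalClosure ⟨f y, rfl⟩

lemma delta_le_comap_delta (f : G →* H) :
    delta G ≤ MonoidHom.ker ((QuotientGroup.mk' (delta H)).comp (tmap f)) := by
  refine Subgroup.normalClosure_le_normal ?_
  rintro _ ⟨x, y, rfl⟩
  simp only [SetLike.mem_coe, MonoidHom.mem_ker, MonoidHom.comp_apply, map_mul, tmap_tmul,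
    QuotientGroup.mk'_apply, ← QuotientGroup.mk_mul, QuotientGroup.eq_one_iff]
  exact Subgroup.subset_normalClosure ⟨f x, f y, rfl⟩

/-- The induced homomorphism `G ∧ G → H ∧ H` of a homomorphism `f : G → H`. -/
def emap (f : G →* H) : ES G →* ES H :=
  QuotientGroup.lift (nabla G) ((QuotientGroup.mk' (nabla H)).comp (tmap f))
    (fun x hx => MonoidHom.mem_ker.mp (nabla_le_comap_nabla f hx))

@[simp] lemma emap_emul (f : G →* H) (g h : G) :
    emap f (emul g h) = emul (f g) (f h) := by
  simp [emap, emul, QuotientGroup.mk'_apply, QuotientGroup.lift_mk']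
  exact (QuotientGroup.lift_mk _ _ _).trans (by simp)

/-- The induced homomorphism `G ⊗̃ G → H ⊗̃ H` of a homomorphism `f : G → H`. -/
def smap (f : G →* H) : SS G →* SS H :=
  QuotientGroup.lift (delta G) ((QuotientGroup.mk' (delta H)).comp (tmap f))
    (fun x hx => MonoidHom.mem_ker.mp (delta_le_comap_delta f hx))

variable (G)

lemma nabla_le_ker_kappa : nabla G ≤ (kappa G).ker := by
  refine Subgroup.normalClosure_le_normal ?_
  rintro _ ⟨x, rfl⟩
  simp only [SetLike.mem_coe, MonoidHom.mem_ker, kappa_tmul]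
  group

/-- The homomorphism `κ' : G ∧ G → G`, `g ∧ h ↦ [g,h]` (its image is `[G,G]`). -/
def kappa' : ES G →* G :=
  QuotientGroup.lift (nabla G) (kappa G)
    (fun x hx => MonoidHom.mem_ker.mp (nabla_le_ker_kappa G hx))

/-- The Schur multiplier `M(G) = ker κ' ≅ H₂(G)`. -/
def M : Subgroup (ES G) := (kappa' G).ker

/-- `J̃(G) = J(G)/Δ(G) ≅ π₂ˢ(K(G,1))`, realized as the image of `J(G)` in `G ⊗̃ G`. -/
def Jt : Subgroup (SS G) := Subgroup.map (QuotientGroup.mk' (delta G)) (J G)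

/-- `∇(G)/Δ(G)`, realized as the image of `∇(G)` in `G ⊗̃ G`. -/
def nablaBar : Subgroup (SS G) := Subgroup.map (QuotientGroup.mk' (delta G)) (nabla G)

end NATensor

/-!
For abelian `A` the tensor square `A ⊗ A` is abelian and biadditive, so if every element of `A`
has odd order, so does every element of `A ⊗ A`, and squaring is an automorphism of `A ⊗ A`.
With `σ` the flip `g ⊗ h ↦ h ⊗ g`, the endomorphism `x ↦ √(x · σ x)` takes values in `∇(A)`
(as `(g ⊗ h)(h ⊗ g) = (gh ⊗ gh)(g ⊗ g)⁻¹(h ⊗ h)⁻¹`) and is the identity on `∇(A)`, where `σ` is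
trivial. A retraction onto a normal subgroup `N` splits the group as `N × G ⧸ N`.
-/

section OddTorsion

variable {M : Type*} [Monoid M]

theorem pow_two_pow_eq_self_of_pow_eq_one {x : M} {k : ℕ} (hx : x ^ (2 * k + 1) = 1) :
    (x ^ 2) ^ (k + 1) = x := by
  rw [← pow_mul, show 2 * (k + 1) = (2 * k + 1) + 1 by ring, pow_succ, hx, one_mul]

theorem bijective_pow_two_of_exists_odd_pow_eq_one (h : ∀ x : M, ∃ n, Odd n ∧ x ^ n = 1) :
    Function.Bijective (fun x : M => x ^ 2) := by
  refine ⟨fun x y hxy => ?_, fun x => ?_⟩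
  · obtain ⟨m, hm, hxm⟩ := h x
    obtain ⟨n, hn, hyn⟩ := h y
    -- a common odd exponent `m * n = 2 * k + 1` kills both `x` and `y`
    obtain ⟨k, hk⟩ := hm.mul hn
    have hx : x ^ (2 * k + 1) = 1 := by rw [← hk, pow_mul, hxm, one_pow]
    have hy : y ^ (2 * k + 1) = 1 := by rw [← hk, pow_mul', hyn, one_pow]
    rw [← pow_two_pow_eq_self_of_pow_eq_one hx, ← pow_two_pow_eq_self_of_pow_eq_one hy]
    exact congrArg (· ^ (k + 1)) hxy
  · obtain ⟨n, ⟨k, rfl⟩, hx⟩ := h x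
    exact ⟨x ^ (k + 1), (pow_right_comm _ _ _).trans (pow_two_pow_eq_self_of_pow_eq_one hx)⟩

theorem odd_orderOf_of_forall_sq_eq_one {a : M} (ha : IsOfFinOrder a)
    (h2 : ∀ b : M, b ^ 2 = 1 → b = 1) : Odd (orderOf a) := by
  rw [← Nat.not_even_iff_odd]
  rintro ⟨m, hm⟩
  have hm0 : m ≠ 0 := by rintro rfl; exact ha.orderOf_pos.ne' hm
  have hord : orderOf (a ^ m) = 2 := by
    rw [orderOf_pow_of_dvd hm0 ⟨2, by omega⟩, hm, ← two_mul, Nat.mul_div_cancel _ (by omega)]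
  have ham : a ^ m = 1 := h2 _ (by rw [← hord]; exact pow_orderOf_eq_one _)
  rw [ham, orderOf_one] at hord
  omega

end OddTorsion

theorem Subgroup.mul_comm_of_closure_eq_top {G : Type*} [Group G] {s : Set G}
    (hs : Subgroup.closure s = ⊤) (hcomm : ∀ a ∈ s, ∀ b ∈ s, a * b = b * a) (x y : G) :
    x * y = y * x :=
  have hle := hs ▸ Subgroup.closure_le_centralizer_centralizer s
  Set.centralizer_centralizer_comm_of_comm hcomm x (hle (Subgroup.mem_top x)) y
    (hle (Subgroup.mem_top y))

section CommGroup

variable {G : Type*} [CommGroup G]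

variable (G) in
def oddTorsion : Subgroup G where
  carrier := {x | ∃ n, Odd n ∧ x ^ n = 1}
  one_mem' := ⟨1, odd_one, one_pow 1⟩
  mul_mem' := by
    rintro x y ⟨m, hm, hxm⟩ ⟨n, hn, hyn⟩
    exact ⟨m * n, hm.mul hn, by
      rw [mul_pow, pow_mul, pow_mul', hxm, hyn, one_pow, one_pow, one_mul]⟩
  inv_mem' := by
    rintro x ⟨n, hn, hxn⟩
    exact ⟨n, hn, by rw [inv_pow, hxn, inv_one]⟩

theorem Subgroup.exists_retraction_of_bijective_pow_two
    (hsq : Function.Bijective (fun x : G => x ^ 2)) {N : Subgroup G} (f : G →* G)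
    (hf : ∀ x, f x ∈ N) (hfN : ∀ n ∈ N, f n = n ^ 2) :
    ∃ r : G →* N, ∀ n : N, r n = n := by
  let E : G ≃* G := MulEquiv.ofBijective (powMonoidHom 2) hsq
  have hE : ∀ x, E x = x ^ 2 := fun _ => rfl
  have hEf : ∀ x, E.symm (f x) = f (E.symm x) := fun x =>
    E.injective (by rw [E.apply_symm_apply, hE, ← map_pow, ← hE, E.apply_symm_apply])
  refine ⟨(E.symm.toMonoidHom.comp f).codRestrict N fun x => ?_, fun n => Subtype.ext ?_⟩
  · simpa [hEf] using hf (E.symm x)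
  · simp [hfN n n.2, ← hE]

end CommGroup

noncomputable def Subgroup.equivProdQuotientOfRetraction {G : Type*} [Group G] {N : Subgroup G}
    [N.Normal] (r : G →* N) (hr : ∀ n : N, r n = n) : G ≃* N × G ⧸ N :=
  MulEquiv.ofBijective (r.prod (QuotientGroup.mk' N)) <| by
    refine ⟨fun x y hxy => ?_, fun ⟨n, q⟩ => ?_⟩
    · obtain ⟨hr_eq, hq_eq⟩ := Prod.ext_iff.mp hxy
      obtain ⟨z, hz, rfl⟩ := (QuotientGroup.mk'_eq_mk' N).mp hq_eq
      have hz1 : (⟨z, hz⟩ : N) = 1 := by simpa [← hr ⟨z, hz⟩] using hr_eq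
      rw [show z = 1 from congrArg Subtype.val hz1, mul_one]
    · obtain ⟨x, rfl⟩ := QuotientGroup.mk'_surjective N q
      refine ⟨x * ((r x)⁻¹ * n : N), Prod.ext ?_ ?_⟩
      · simp [hr]
      · simp [QuotientGroup.eq_one_iff]

namespace NATensor

variable {A : Type*} [CommGroup A]

theorem tmul_mul_left (g g' h : A) : tmul (g * g') h = tmul g' h * tmul g h := by
  simpa [mul_inv_cancel_comm] using tmul_rel₁ g g' h

theorem tmul_mul_right (g h h' : A) : tmul g (h * h') = tmul g h * tmul g h' := by
  simpa [mul_inv_cancel_comm] using tmul_rel₂ g h h'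

theorem tmul_commute (g h g' h' : A) : Commute (tmul g h) (tmul g' h') := by
  -- expand `tmul (g' * g) (h' * h)` in the two possible orders
  have e := tmul_mul_right (g' * g) h' h
  rw [tmul_mul_left, tmul_mul_left, tmul_mul_left, tmul_mul_right, tmul_mul_right] at e
  simp only [mul_assoc, mul_right_inj] at e
  simp only [← mul_assoc, mul_left_inj] at e
  exact e

noncomputable instance : CommGroup (TS A) :=
  { (inferInstance : Group (TS A)) with
    mul_comm := Subgroup.mul_comm_of_closure_eq_top (PresentedGroup.closure_range_of _) <| by
      rintro _ ⟨⟨g, h⟩, rfl⟩ _ ⟨⟨g', h'⟩, rfl⟩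
      exact tmul_commute g h g' h' }

def tmulLeft (h : A) : A →* TS A :=
  MonoidHom.mk' (fun g => tmul g h) fun g g' => by rw [tmul_mul_left, mul_comm]

theorem oddTorsion_eq_top (hA : oddTorsion A = ⊤) : oddTorsion (TS A) = ⊤ := by
  rw [eq_top_iff, ← PresentedGroup.closure_range_of, Subgroup.closure_le]
  rintro _ ⟨⟨g, h⟩, rfl⟩
  obtain ⟨n, hn, hgn⟩ := hA ▸ Subgroup.mem_top g
  exact ⟨n, hn, by rw [show PresentedGroup.of (g, h) = tmulLeft h g from rfl, ← map_pow, hgn,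
    map_one]⟩

def tswap : TS A →* TS A :=
  PresentedGroup.toGroup (f := fun x : A × A => tmul x.2 x.1) (by
    rintro r (⟨g, g', h, rfl⟩ | ⟨g, h, h', rfl⟩) <;>
      simp only [map_mul, map_inv, FreeGroup.lift_apply_of, mul_inv_eq_one, mul_inv_cancel_comm]
    · rw [tmul_mul_right, mul_comm]
    · rw [tmul_mul_left, mul_comm])

@[simp] theorem tswap_tmul (g h : A) : tswap (tmul g h) = tmul h g :=
  PresentedGroup.toGroup.of _

theorem tmul_self_mem_nabla (g : A) : tmul g g ∈ nabla A :=
  Subgroup.subset_normalClosure ⟨g, rfl⟩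

theorem tmul_mul_tmul_mem_nabla (g h : A) : tmul g h * tmul h g ∈ nabla A := by
  have e : tmul g h * tmul h g = tmul (g * h) (g * h) / (tmul g g * tmul h h) := by
    rw [eq_div_iff_mul_eq', tmul_mul_left, tmul_mul_right, tmul_mul_right]
    ac_rfl
  rw [e]
  exact div_mem (tmul_self_mem_nabla _)
    (mul_mem (tmul_self_mem_nabla _) (tmul_self_mem_nabla _))

theorem mul_tswap_mem_nabla (x : TS A) : x * tswap x ∈ nabla A := by
  suffices ⊤ ≤ (nabla A).comap (MonoidHom.id _ * tswap) from this (Subgroup.mem_top x)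
  rw [← PresentedGroup.closure_range_of, Subgroup.closure_le]
  rintro _ ⟨⟨g, h⟩, rfl⟩
  exact tmul_mul_tmul_mem_nabla g h

theorem tswap_eq_self_of_mem_nabla {x : TS A} (hx : x ∈ nabla A) : tswap x = x := by
  suffices nabla A ≤ tswap.eqLocus (MonoidHom.id _) from this hx
  refine Subgroup.normalClosure_le_normal ?_
  rintro _ ⟨g, rfl⟩
  exact tswap_tmul g g

end NATensor

open NATensor in
/-- for an abelian torsion group `A` with no elements of order 2, the short
exact sequence `1 → ∇(A) → A ⊗ A → A ∧ A → 1` splits on the left; consequently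
`A ⊗ A ≅ ∇(A) × (A ∧ A)`. -/
theorem tensor_square_splits_of_torsion_abelian (A : Type*) [CommGroup A]
    (htor : ∀ a : A, IsOfFinOrder a) (h2 : ∀ a : A, a ^ 2 = 1 → a = 1) :
    (∃ α : TS A →* ↥(nabla A), ∀ y : ↥(nabla A), α (y : TS A) = y) ∧
    Nonempty (TS A ≃* ↥(nabla A) × ES A) := by
  have hA : oddTorsion A = ⊤ := (Subgroup.eq_top_iff' _).mpr fun a =>
    ⟨orderOf a, odd_orderOf_of_forall_sq_eq_one (htor a) h2, pow_orderOf_eq_one a⟩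
  have hsq : Function.Bijective (fun x : TS A => x ^ 2) :=
    bijective_pow_two_of_exists_odd_pow_eq_one ((Subgroup.eq_top_iff' _).mp (oddTorsion_eq_top hA))
  obtain ⟨r, hr⟩ := Subgroup.exists_retraction_of_bijective_pow_two hsq
    (MonoidHom.id _ * tswap) mul_tswap_mem_nabla
    fun n hn => by simp [tswap_eq_self_of_mem_nabla hn, sq]
  exact ⟨⟨r, hr⟩, ⟨Subgroup.equivProdQuotientOfRetraction r hr⟩⟩
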